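/- Let φ ∈ S(ℝ³) be spherically symmetric with φ̂(0) ≠ 0, let e₁,…,e_N ∈ ℝ not all zero (in particular with Σⱼ eⱼ ≠ 0 allowed), x, ẋ, ẍ ∈ (ℝ³)^N bounded, and for 0 < σ ≤ 1/3 define ż₂ ∈ L²(ℝ³) by ż₂(k) = 1_{[σ,∞)}(|k|) Σⱼ eⱼ φ̂(k) |k|^{−1/2} e^{−ik·xⱼ} ( |k|^{−1} ⟨κ, ẍⱼ⟩ + ⟨κ, ẋⱼ⟩² ) with κ = k/|k|. Then ‖ż₂‖²_{L²(ℝ³)} = O(ln(σ⁻¹)) as σ → 0. -/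

import Mathlib

/-! Since `κ` is a unit vector, the `j`-th summand of `ż₂(k)` is bounded by
`|eⱼ| |φ̂(k)| |k|^{-1/2} max(1, |k|⁻¹) (|ẍⱼ| + |ẋⱼ|²)`. After squaring, this is at most
`‖φ̂‖∞² |k|⁻³` on the shell `σ ≤ |k| ≤ 1`, whose integral is `4π ln σ⁻¹` in polar coordinates,
plus `|φ̂(k)|²`, which is integrable because `φ̂` is a Schwartz function. For `σ ≤ 1/3` we have
`ln σ⁻¹ ≥ 1`, so the constant term is absorbed. -/

open MeasureTheory Complex SchwartzMap

noncomputable section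

abbrev R3 : Type := EuclideanSpace ℝ (Fin 3)

section Annulus

variable {E : Type*} [NormedAddCommGroup E] [NormedSpace ℝ E] [FiniteDimensional ℝ E]
  [Nontrivial E] [MeasurableSpace E] [BorelSpace E] (μ : Measure E) [μ.IsAddHaarMeasure]
  {σ : ℝ}

lemma pow_pred_smul_indicator_inv_pow {d : ℕ} (hd : d ≠ 0) (hσ : 0 < σ) (y : ℝ) :
    y ^ (d - 1) • (Set.Icc σ 1).indicator (fun y => (y ^ d)⁻¹) y
      = (Set.Icc σ 1).indicator (fun y => y⁻¹) y := by
  by_cases hy : y ∈ Set.Icc σ 1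
  · have hy0 : y ≠ 0 := (hσ.trans_le hy.1).ne'
    rw [Set.indicator_of_mem hy, Set.indicator_of_mem hy, smul_eq_mul,
      ← pow_sub_one_mul hd, mul_inv, mul_inv_cancel_left₀ (pow_ne_zero _ hy0)]
  · simp [Set.indicator_of_notMem hy]

lemma integrable_indicator_annulus_inv_norm_pow_finrank (hσ : 0 < σ) :
    Integrable (fun x : E => (Set.Icc σ 1).indicator
      (fun y => (y ^ Module.finrank ℝ E)⁻¹) ‖x‖) μ := by
  rw [integrable_fun_norm_addHaar μ]
  simp only [pow_pred_smul_indicator_inv_pow Module.finrank_pos.ne' hσ]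
  refine Integrable.integrableOn ?_
  rw [integrable_indicator_iff measurableSet_Icc]
  exact (continuousOn_inv₀.mono fun y hy => (hσ.trans_le hy.1).ne').integrableOn_Icc

lemma integral_indicator_annulus_inv_norm_pow_finrank (hσ : 0 < σ) (hσ1 : σ ≤ 1) :
    ∫ x : E, (Set.Icc σ 1).indicator (fun y => (y ^ Module.finrank ℝ E)⁻¹) ‖x‖ ∂μ
      = Module.finrank ℝ E * μ.real (Metric.ball 0 1) * Real.log σ⁻¹ := by
  rw [integral_fun_norm_addHaar μ]
  simp only [pow_pred_smul_indicator_inv_pow Module.finrank_pos.ne' hσ]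
  rw [setIntegral_indicator measurableSet_Icc,
    Set.inter_eq_right.mpr ((Set.Icc_subset_Ioi_iff hσ1).mpr hσ),
    integral_Icc_eq_integral_Ioc,
    ← intervalIntegral.integral_of_le hσ1, integral_inv_of_pos hσ one_pos, one_div,
    nsmul_eq_mul, smul_eq_mul, mul_assoc]

end Annulus

section Pointwise

variable {E : Type*} [NormedAddCommGroup E] [InnerProductSpace ℝ E] {N : ℕ}

/-- The paper's `ż₂` without the cut-off `1_{[σ,∞)}(|k|)`, with `Φ` in place of `φ̂`. -/
def z2dot (e : Fin N → ℝ) (Φ : E → ℂ) (x dx ddx : Fin N → E) (k : E) : ℂ :=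
  ∑ j, ((e j : ℝ) : ℂ) * Φ k
    * ((Real.sqrt ‖k‖ : ℝ) : ℂ)⁻¹
    * Complex.exp (-Complex.I * ((inner ℝ k (x j) : ℝ) : ℂ))
    * (((‖k‖⁻¹ * (inner ℝ (‖k‖⁻¹ • k) (ddx j) : ℝ)
      + (inner ℝ (‖k‖⁻¹ • k) (dx j) : ℝ) ^ 2 : ℝ)) : ℂ)

lemma abs_inv_mul_inner_add_inner_sq_le {κ : E} (hκ : ‖κ‖ = 1) {r : ℝ} (hr : 0 < r) (a v : E) :
    |r⁻¹ * inner ℝ κ a + inner ℝ κ v ^ 2| ≤ max 1 r⁻¹ * (‖a‖ + ‖v‖ ^ 2) := by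
  have ha : |inner ℝ κ a| ≤ ‖a‖ := by simpa [hκ] using abs_real_inner_le_norm κ a
  have hv : inner ℝ κ v ^ 2 ≤ ‖v‖ ^ 2 := by
    simpa [hκ] using sq_le_sq' (neg_le_of_abs_le (abs_real_inner_le_norm κ v))
      (le_of_abs_le (abs_real_inner_le_norm κ v))
  calc |r⁻¹ * inner ℝ κ a + inner ℝ κ v ^ 2|
      ≤ |r⁻¹ * inner ℝ κ a| + |inner ℝ κ v ^ 2| := abs_add_le _ _
    _ = r⁻¹ * |inner ℝ κ a| + inner ℝ κ v ^ 2 := by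
        rw [abs_mul, abs_of_pos (inv_pos.2 hr), abs_sq]
    _ ≤ max 1 r⁻¹ * ‖a‖ + max 1 r⁻¹ * ‖v‖ ^ 2 :=
        add_le_add (mul_le_mul (le_max_right _ _) ha (abs_nonneg _) (by positivity))
          (hv.trans (le_mul_of_one_le_left (sq_nonneg _) (le_max_left _ _)))
    _ = max 1 r⁻¹ * (‖a‖ + ‖v‖ ^ 2) := by ring

lemma norm_z2dot_le (e : Fin N → ℝ) (Φ : E → ℂ) (x dx ddx : Fin N → E) {k : E} (hk : k ≠ 0) :
    ‖z2dot e Φ x dx ddx k‖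
      ≤ (∑ j, |e j| * (‖ddx j‖ + ‖dx j‖ ^ 2)) * (‖Φ k‖ * (√‖k‖)⁻¹ * max 1 ‖k‖⁻¹) := by
  have hκ : ‖‖k‖⁻¹ • k‖ = 1 := norm_smul_inv_norm hk
  rw [z2dot, Finset.sum_mul]
  refine (norm_sum_le _ _).trans (Finset.sum_le_sum fun j _ => ?_)
  have hexp : ‖Complex.exp (-Complex.I * ((inner ℝ k (x j) : ℝ) : ℂ))‖ = 1 := by
    rw [Complex.norm_exp]; simp
  simp only [norm_mul, norm_inv, hexp, Complex.norm_real, Real.norm_eq_abs,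
    abs_of_nonneg (Real.sqrt_nonneg _), mul_one]
  calc |e j| * ‖Φ k‖ * (√‖k‖)⁻¹ * |‖k‖⁻¹ * inner ℝ (‖k‖⁻¹ • k) (ddx j)
        + inner ℝ (‖k‖⁻¹ • k) (dx j) ^ 2|
      ≤ |e j| * ‖Φ k‖ * (√‖k‖)⁻¹ * (max 1 ‖k‖⁻¹ * (‖ddx j‖ + ‖dx j‖ ^ 2)) := by
        gcongr
        exact abs_inv_mul_inner_add_inner_sq_le hκ (norm_pos_iff.2 hk) _ _
    _ = |e j| * (‖ddx j‖ + ‖dx j‖ ^ 2) * (‖Φ k‖ * (√‖k‖)⁻¹ * max 1 ‖k‖⁻¹) := by ring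

lemma inv_mul_max_one_inv_sq_le {σ r : ℝ} (hσ : 0 < σ) (hr : σ ≤ r) :
    r⁻¹ * max 1 r⁻¹ ^ 2 ≤ (Set.Icc σ 1).indicator (fun y => (y ^ 3)⁻¹) r + 1 := by
  have hr0 : 0 < r := hσ.trans_le hr
  rcases le_or_gt r 1 with hr1 | hr1
  · rw [Set.indicator_of_mem (show r ∈ Set.Icc σ 1 from ⟨hr, hr1⟩),
      max_eq_right ((one_le_inv₀ hr0).2 hr1)]
    have : r⁻¹ * r⁻¹ ^ 2 = (r ^ 3)⁻¹ := by rw [← inv_pow, ← pow_succ']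
    linarith
  · rw [Set.indicator_of_notMem fun h : r ∈ Set.Icc σ 1 => hr1.not_ge h.2,
      max_eq_left (inv_le_one_of_one_le₀ hr1.le)]
    linarith [inv_le_one_of_one_le₀ hr1.le]

lemma norm_indicator_z2dot_sq_le (e : Fin N → ℝ) {Φ : E → ℂ} {M : ℝ} (hM : ∀ k, ‖Φ k‖ ≤ M)
    (x dx ddx : Fin N → E) {σ : ℝ} (hσ : 0 < σ) (k : E) :
    ‖{k : E | σ ≤ ‖k‖}.indicator (z2dot e Φ x dx ddx) k‖ ^ 2
      ≤ (∑ j, |e j| * (‖ddx j‖ + ‖dx j‖ ^ 2)) ^ 2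
        * (M ^ 2 * (Set.Icc σ 1).indicator (fun y => (y ^ 3)⁻¹) ‖k‖ + ‖Φ k‖ ^ 2) := by
  set A := ∑ j, |e j| * (‖ddx j‖ + ‖dx j‖ ^ 2)
  have hind : 0 ≤ (Set.Icc σ 1).indicator (fun y => (y ^ 3)⁻¹) ‖k‖ :=
    Set.indicator_nonneg (fun y hy => inv_nonneg.2 (pow_nonneg (hσ.le.trans hy.1) 3)) _
  by_cases hk : σ ≤ ‖k‖
  swap
  · rw [Set.indicator_of_notMem (show k ∉ {k : E | σ ≤ ‖k‖} from hk), norm_zero,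
      zero_pow two_ne_zero]
    positivity
  rw [Set.indicator_of_mem (show k ∈ {k : E | σ ≤ ‖k‖} from hk)]
  have hk0 : 0 < ‖k‖ := hσ.trans_le hk
  have hsqrt : ((√‖k‖)⁻¹) ^ 2 = ‖k‖⁻¹ := by rw [inv_pow, Real.sq_sqrt hk0.le]
  calc ‖z2dot e Φ x dx ddx k‖ ^ 2
      ≤ (A * (‖Φ k‖ * (√‖k‖)⁻¹ * max 1 ‖k‖⁻¹)) ^ 2 := by
        gcongr; exact norm_z2dot_le e Φ x dx ddx (norm_pos_iff.1 hk0)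
    _ = A ^ 2 * (‖Φ k‖ ^ 2 * (‖k‖⁻¹ * max 1 ‖k‖⁻¹ ^ 2)) := by rw [← hsqrt]; ring
    _ ≤ A ^ 2 * (‖Φ k‖ ^ 2 * ((Set.Icc σ 1).indicator (fun y => (y ^ 3)⁻¹) ‖k‖ + 1)) := by
        gcongr; exact inv_mul_max_one_inv_sq_le hσ hk
    _ ≤ A ^ 2 * (M ^ 2 * (Set.Icc σ 1).indicator (fun y => (y ^ 3)⁻¹) ‖k‖ + ‖Φ k‖ ^ 2) := by
        rw [mul_add, mul_one]; gcongr; exact hM k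

end Pointwise

lemma integral_norm_indicator_z2dot_sq_le {N : ℕ} (e : Fin N → ℝ) {Φ : R3 → ℂ} {M : ℝ}
    (hM : ∀ k, ‖Φ k‖ ≤ M) (hΦ : MemLp Φ 2) (x dx ddx : Fin N → R3) {σ : ℝ} (hσ : 0 < σ)
    (hσ1 : σ ≤ 1) :
    ∫ k : R3, ‖{k : R3 | σ ≤ ‖k‖}.indicator (z2dot e Φ x dx ddx) k‖ ^ 2
      ≤ (∑ j, |e j| * (‖ddx j‖ + ‖dx j‖ ^ 2)) ^ 2
        * (M ^ 2 * (3 * (volume : Measure R3).real (Metric.ball 0 1) * Real.log σ⁻¹)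
          + ∫ k : R3, ‖Φ k‖ ^ 2) := by
  have hdim : Module.finrank ℝ R3 = 3 := finrank_euclideanSpace_fin
  have hann := integrable_indicator_annulus_inv_norm_pow_finrank (volume : Measure R3) hσ
  have hann_eq := integral_indicator_annulus_inv_norm_pow_finrank (volume : Measure R3) hσ hσ1
  rw [hdim] at hann hann_eq
  have hΦ2 : Integrable (fun k => ‖Φ k‖ ^ 2) := hΦ.integrable_norm_pow two_ne_zero
  calc ∫ k : R3, ‖{k : R3 | σ ≤ ‖k‖}.indicator (z2dot e Φ x dx ddx) k‖ ^ 2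
      ≤ ∫ k : R3, (∑ j, |e j| * (‖ddx j‖ + ‖dx j‖ ^ 2)) ^ 2
          * (M ^ 2 * (Set.Icc σ 1).indicator (fun y => (y ^ 3)⁻¹) ‖k‖ + ‖Φ k‖ ^ 2) :=
        integral_mono_of_nonneg (ae_of_all _ fun k => by positivity)
          (((hann.const_mul _).add hΦ2).const_mul _)
          (ae_of_all _ (norm_indicator_z2dot_sq_le e hM x dx ddx hσ))
    _ = _ := by
        rw [integral_const_mul, integral_add (hann.const_mul _) hΦ2, integral_const_mul, hann_eq]
        push_cast; ring

lemma one_le_log_inv_of_le_third {σ : ℝ} (hσ : 0 < σ) (hσ3 : σ ≤ 1 / 3) : 1 ≤ Real.log σ⁻¹ := by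
  rw [Real.le_log_iff_exp_le (inv_pos.2 hσ)]
  calc Real.exp 1 ≤ 3 := Real.exp_one_lt_d9.le.trans (by norm_num)
    _ ≤ σ⁻¹ := by rw [le_inv_comm₀ (by norm_num) hσ]; simpa using hσ3

theorem log_divergence_of_z2dot_general
    (N : ℕ) (e : Fin N → ℝ)
    (φ : SchwartzMap R3 ℂ)
    (x dx ddx : Fin N → R3) :
    ∃ C : ℝ, ∀ σ : ℝ, 0 < σ → σ ≤ 1/3 →
      (∫ k : R3, ‖Set.indicator {k : R3 | σ ≤ ‖k‖}
          (fun k => ∑ j, ((e j : ℝ) : ℂ) * (fourierTransformCLM ℂ φ) k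
            * ((Real.sqrt ‖k‖ : ℝ) : ℂ)⁻¹
            * Complex.exp (-Complex.I * ((inner ℝ k (x j) : ℝ) : ℂ))
            * (((‖k‖⁻¹ * (inner ℝ (‖k‖⁻¹ • k) (ddx j) : ℝ)
                + (inner ℝ (‖k‖⁻¹ • k) (dx j) : ℝ) ^ 2 : ℝ)) : ℂ)) k‖ ^ 2)
      ≤ C * Real.log σ⁻¹ := by
  set Φ := fourierTransformCLM ℂ φ
  set A := ∑ j, |e j| * (‖ddx j‖ + ‖dx j‖ ^ 2)
  set M := SchwartzMap.seminorm ℝ 0 0 Φ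
  set V := (volume : Measure R3).real (Metric.ball 0 1)
  set I := ∫ k : R3, ‖Φ k‖ ^ 2
  refine ⟨A ^ 2 * (M ^ 2 * (3 * V) + I), fun σ hσ hσ3 => ?_⟩
  have hlog := one_le_log_inv_of_le_third hσ hσ3
  have hI : 0 ≤ I := integral_nonneg fun k => by positivity
  calc _ ≤ A ^ 2 * (M ^ 2 * (3 * V * Real.log σ⁻¹) + I) :=
        integral_norm_indicator_z2dot_sq_le e (SchwartzMap.norm_le_seminorm ℝ Φ)
          (Φ.memLp 2) x dx ddx hσ (hσ3.trans (by norm_num))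
    _ = A ^ 2 * (M ^ 2 * (3 * V) * Real.log σ⁻¹ + I) := by ring
    _ ≤ A ^ 2 * (M ^ 2 * (3 * V) * Real.log σ⁻¹ + I * Real.log σ⁻¹) := by
        gcongr; exact le_mul_of_one_le_right hI hlog
    _ = A ^ 2 * (M ^ 2 * (3 * V) + I) * Real.log σ⁻¹ := by ring

/-- Let `φ ∈ S(ℝ³)` be spherically symmetric with `φ̂(0) ≠ 0`, let the
charges `e₁,…,e_N ∈ ℝ` be not all zero (nonzero total charge allowed), and let positions
`x`, velocities `dx` and accelerations `ddx` in `(ℝ³)^N` be given (bounded, being fixed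
vectors). For `0 < σ ≤ 1/3` define
`ż₂(k) = 1_{[σ,∞)}(|k|) Σⱼ eⱼ φ̂(k) |k|^{−1/2} e^{−ik·xⱼ}(|k|^{−1}⟨κ, ẍⱼ⟩ + ⟨κ, ẋⱼ⟩²)`
with `κ = k/|k|`. Then `‖ż₂‖²_{L²} = O(ln(σ⁻¹))` as `σ → 0`. -/
theorem log_divergence_of_z2dot
    (N : ℕ) (e : Fin N → ℝ) (he : ∃ j, e j ≠ 0)
    (φ : SchwartzMap R3 ℂ)
    (hφsym : ∀ k k' : R3, ‖k‖ = ‖k'‖ → φ k = φ k')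
    (hφ0 : (fourierTransformCLM ℂ φ) 0 ≠ 0)
    (x dx ddx : Fin N → R3) :
    ∃ C : ℝ, ∀ σ : ℝ, 0 < σ → σ ≤ 1/3 →
      (∫ k : R3, ‖Set.indicator {k : R3 | σ ≤ ‖k‖}
          (fun k => ∑ j, ((e j : ℝ) : ℂ) * (fourierTransformCLM ℂ φ) k
            * ((Real.sqrt ‖k‖ : ℝ) : ℂ)⁻¹
            * Complex.exp (-Complex.I * ((inner ℝ k (x j) : ℝ) : ℂ))
            * (((‖k‖⁻¹ * (inner ℝ (‖k‖⁻¹ • k) (ddx j) : ℝ)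
                + (inner ℝ (‖k‖⁻¹ • k) (dx j) : ℝ) ^ 2 : ℝ)) : ℂ)) k‖ ^ 2)
      ≤ C * Real.log σ⁻¹ :=
  log_divergence_of_z2dot_general N e φ x dx ddx
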